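/- Let X be an m × 2n nonnegative matrix with total mass at most 1, viewed as partitioned into n 'active' and n 'inactive' columns, where the target is that each active column sums to 1/n and each inactive column sums to 0. If the total ℓ₁ violation of these column-sum constraints is Δ, then there exists a nonnegative matrix X' with the same total entry sum, satisfying all column-sum constraints exactly, such that the entrywise ℓ₁ distance between X and X' is at most 2Δ. -/

import Mathlib

/-!
Fix each column separately: scale it by `target / colsum` (or, if the column is zero, spread the
target uniformly over it). Scaling a nonnegative vector changes its ℓ₁ mass by exactly
`|colsum - target|`, so the repaired matrix is at distance exactly `Δ ≤ 2Δ` from `X`.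
-/

open Finset

theorem exists_nonneg_sum_eq_sum_abs_sub_eq {ι : Type*} [Fintype ι] [Nonempty ι]
    {v : ι → ℝ} (hv : ∀ i, 0 ≤ v i) {t : ℝ} (ht : 0 ≤ t) :
    ∃ w : ι → ℝ, (∀ i, 0 ≤ w i) ∧ ∑ i, w i = t ∧ ∑ i, |v i - w i| = |∑ i, v i - t| := by
  obtain hs | hs := (sum_nonneg fun i _ => hv i : 0 ≤ ∑ i, v i).eq_or_lt
  · have hv0 : ∀ i, v i = 0 := by
      simpa using (sum_eq_zero_iff_of_nonneg fun i _ => hv i).mp hs.symm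
    have hw : 0 ≤ t / Fintype.card ι := by positivity
    refine ⟨fun _ => t / Fintype.card ι, fun _ => hw, by simp [field], ?_⟩
    simp [hv0, abs_of_nonneg hw, abs_of_nonneg ht, field]
  · refine ⟨fun i => v i * (t / ∑ i, v i), fun i => mul_nonneg (hv i) (by positivity),
      by rw [← sum_mul]; field_simp, ?_⟩
    calc ∑ i, |v i - v i * (t / ∑ i, v i)|
        = ∑ i, v i * |1 - t / ∑ i, v i| := by
          refine sum_congr rfl fun i _ => ?_
          rw [← mul_one_sub, abs_mul, abs_of_nonneg (hv i)]
      _ = |∑ i, v i - t| := by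
          rw [← sum_mul, ← abs_of_pos hs, ← abs_mul, abs_of_pos hs, mul_one_sub,
            mul_div_cancel₀ _ hs.ne']

theorem Matrix.exists_nonneg_colSum_eq {ι κ : Type*} [Fintype ι] [Nonempty ι] [Fintype κ]
    {X : Matrix ι κ ℝ} (hX : ∀ i j, 0 ≤ X i j) {c : κ → ℝ} (hc : ∀ j, 0 ≤ c j) :
    ∃ X' : Matrix ι κ ℝ, (∀ i j, 0 ≤ X' i j) ∧ (∀ j, ∑ i, X' i j = c j) ∧
      ∑ i, ∑ j, X' i j = ∑ j, c j ∧ ∑ i, ∑ j, |X i j - X' i j| = ∑ j, |∑ i, X i j - c j| := by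
  choose w hw_nonneg hw_sum hw_dist using
    fun j => exists_nonneg_sum_eq_sum_abs_sub_eq (fun i => hX i j) (hc j)
  exact ⟨fun i j => w j i, fun i j => hw_nonneg j i, hw_sum,
    by rw [sum_comm]; exact sum_congr rfl fun j _ => hw_sum j,
    by rw [sum_comm]; exact sum_congr rfl fun j _ => hw_dist j⟩

theorem stmt10 (m n : ℕ) (hn : 0 < n)
    (X : Matrix (Fin m) (Fin n ⊕ Fin n) ℝ)  -- `inl` columns are active, `inr` inactive
    (hX : ∀ i j, 0 ≤ X i j)
    (htotal : ∑ i, ∑ j, X i j = 1)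
    (Δ : ℝ)
    (hΔ : (∑ j : Fin n, |(∑ i, X i (Sum.inl j)) - 1 / n|) +
      (∑ j : Fin n, ∑ i, X i (Sum.inr j)) = Δ) :
    ∃ X' : Matrix (Fin m) (Fin n ⊕ Fin n) ℝ,
      (∀ i j, 0 ≤ X' i j) ∧
      (∑ i, ∑ j, X' i j = ∑ i, ∑ j, X i j) ∧
      (∀ j : Fin n, ∑ i, X' i (Sum.inl j) = 1 / n) ∧
      (∀ j : Fin n, ∑ i, X' i (Sum.inr j) = 0) ∧
      ∑ i, ∑ j, |X i j - X' i j| ≤ 2 * Δ := by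
  have : Nonempty (Fin m) := by
    by_contra h
    simp [not_nonempty_iff.mp h] at htotal
  let c : Fin n ⊕ Fin n → ℝ := Sum.elim (fun _ => 1 / n) (fun _ => 0)
  obtain ⟨X', hX'_nonneg, hX'_col, hX'_total, hX'_dist⟩ :=
    Matrix.exists_nonneg_colSum_eq hX (c := c) (by rintro (j | j) <;> simp [c])
  have hdist : ∑ i, ∑ j, |X i j - X' i j| = Δ := by
    rw [hX'_dist, Fintype.sum_sum_type, ← hΔ]
    simp [c, abs_of_nonneg (sum_nonneg fun i _ => hX i _)]
  refine ⟨X', hX'_nonneg, ?_, fun j => hX'_col (.inl j), fun j => hX'_col (.inr j), ?_⟩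
  · rw [hX'_total, htotal]
    simp [c, Fintype.sum_sum_type, field, hn.ne']
  · have : 0 ≤ Δ := hdist ▸ sum_nonneg fun i _ => sum_nonneg fun j _ => abs_nonneg _
    linarith
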